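/- Let C = {c_1, …, c_m} be a set of clauses over boolean variables x_1, …, x_n, where each clause is a set of literals containing no variable together with its negation. Define the semi-automaton A = ({a,b,c}, Q, δ) with Q = { q_{i,j} : 1 ≤ i ≤ m, 0 ≤ j ≤ n+1 } ∪ {q_f} and transitions: for 1 ≤ i ≤ m and 1 ≤ j ≤ n, δ(q_{i,j}, b) = q_f if x_j ∈ c_i and δ(q_{i,j}, b) = q_{i,j+1} otherwise; δ(q_{i,j}, c) = q_f if ¬x_j ∈ c_i and δ(q_{i,j}, c) = q_{i,j+1} otherwise; δ(q_{i,j}, a) = q_{i,j} if j ∈ {0,1} and δ(q_{i,j}, a) = q_f if j ∉ {0,1}; δ(q_{i,n+1}, b) = δ(q_{i,n+1}, c) = q_{i,n+1}; δ(q_{i,0}, b) = q_{i,0}; δ(q_{i,0}, c) = q_{i,1}; and q_f is a sink state. Then A is weakly acyclic, and A has a synchronizing word in the language (a+b)*c(b+c)* (a word of the form u c v with u ∈ {a,b}* and v ∈ {b,c}*) if and only if there is a truth assignment to x_1, …, x_n satisfying every clause of C. -/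

import Mathlib

/-- A three-letter alphabet `{a, b, c}`. -/
inductive ABC : Type
  | a | b | c
  deriving DecidableEq

instance : Fintype ABC where
  elems := {ABC.a, ABC.b, ABC.c}
  complete := fun x => by cases x <;> simp

/-- The transition function extended to words: `δ*(q, u)`. -/
def deltaStar {Q A : Type*} (δ : Q → A → Q) (q : Q) (u : List A) : Q :=
  u.foldl δ q

/-- A complete deterministic semi-automaton is weakly acyclic if all simple
cycles are self-loops. -/
def WeaklyAcyclic {Q A : Type*} (δ : Q → A → Q) : Prop :=
  ∀ (q : Q) (u : List A), u ≠ [] → deltaStar δ q u = q → ∀ x ∈ u, δ q x = q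

/-- The SAT reduction automaton for the constraint language `(a+b)*c(b+c)*`.

Clauses are encoded by `C : Fin m → Fin n → Option Bool`, where
`C i j = some true` means the literal `x_{j+1}` occurs in clause `c_{i+1}`,
`C i j = some false` means `¬x_{j+1}` occurs in it, and `C i j = none` means
neither occurs (so no clause contains a variable together with its negation).

States are `Option (Fin m × Fin (n+2))`, where `some (i, j)` encodes the state
`q_{i+1, j}` (so the second index ranges over `0, 1, …, n+1` as in the paper)
and `none` encodes the sink state `q_f`.

Transitions: for `1 ≤ j ≤ n` (whose variable `x_j` has `Fin n` index `j - 1`),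
`δ(q_{i,j}, b) = q_f` if `x_j ∈ c_i` and `q_{i,j+1}` otherwise;
`δ(q_{i,j}, c) = q_f` if `¬x_j ∈ c_i` and `q_{i,j+1}` otherwise;
`δ(q_{i,j}, a) = q_{i,j}` if `j ∈ {0,1}` and `q_f` otherwise;
`q_{i,n+1}` is fixed by `b` and `c`; `δ(q_{i,0}, b) = q_{i,0}`;
`δ(q_{i,0}, c) = q_{i,1}`; `q_f` is a sink state. -/
def satDelta {m n : ℕ} (C : Fin m → Fin n → Option Bool) :
    Option (Fin m × Fin (n + 2)) → ABC → Option (Fin m × Fin (n + 2))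
  | none, _ => none
  | some (i, j), ABC.a => if j.val ≤ 1 then some (i, j) else none
  | some (i, j), ABC.b =>
      if h0 : j.val = 0 then some (i, j)
      else if h : j.val ≤ n then
        if C i ⟨j.val - 1, by omega⟩ = some true then none
        else some (i, ⟨j.val + 1, by omega⟩)
      else some (i, j)
  | some (i, j), ABC.c =>
      if h0 : j.val = 0 then some (i, ⟨1, by omega⟩)
      else if h : j.val ≤ n then
        if C i ⟨j.val - 1, by omega⟩ = some false then none
        else some (i, ⟨j.val + 1, by omega⟩)
      else some (i, j)

/-!
The position `j` of `q_{i,j}` never decreases along a transition and increases along every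
transition that is not a loop, so all cycles are self-loops.

Since `q_f` is a sink, a synchronizing word must send every state to `q_f`. The letters `a`, `b`
fix `q_{i,0}`, so `u c v` takes it to `q_{i,1}`; from there `v ∈ {b,c}*` is read as a truth
assignment (`b` true, `c` false, one letter per variable), and the run falls into `q_f` exactly
when this assignment makes a literal of `c_i` true. Conversely, for a satisfying assignment `β`,
the word `aba` already kills every `q_{i,j}` with `j ≥ 1`, and `c` followed by the word of `β`
kills every `q_{i,0}`.
-/

section DeltaStar

variable {Q A : Type*} (δ : Q → A → Q)

theorem deltaStar_cons (q : Q) (x : A) (u : List A) :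
    deltaStar δ q (x :: u) = deltaStar δ (δ q x) u := rfl

theorem deltaStar_append (q : Q) (u v : List A) :
    deltaStar δ q (u ++ v) = deltaStar δ (deltaStar δ q u) v :=
  List.foldl_append ..

theorem deltaStar_eq_self_of_forall_mem {q : Q} {u : List A} (h : ∀ x ∈ u, δ q x = q) :
    deltaStar δ q u = q := by
  induction u with
  | nil => rfl
  | cons x u ih =>
    rw [deltaStar_cons, h x List.mem_cons_self]
    exact ih fun y hy => h y (List.mem_cons_of_mem x hy)

section Rank

variable {α : Type*} [Preorder α] {r : Q → α}

theorem le_rank_deltaStar (hr : ∀ q x, δ q x = q ∨ r q < r (δ q x)) (q : Q) (u : List A) :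
    r q ≤ r (deltaStar δ q u) := by
  induction u generalizing q with
  | nil => exact le_rfl
  | cons x u ih =>
    rcases hr q x with h | h
    · rw [deltaStar_cons, h]; exact ih q
    · exact h.le.trans (ih _)

theorem weaklyAcyclic_of_rank (hr : ∀ q x, δ q x = q ∨ r q < r (δ q x)) :
    WeaklyAcyclic δ := by
  suffices h : ∀ (q : Q) (u : List A), deltaStar δ q u = q → ∀ x ∈ u, δ q x = q from
    fun q u _ => h q u
  intro q u hcyc
  induction u with
  | nil => simp
  | cons y u ih =>
    rw [deltaStar_cons] at hcyc
    have hy : δ q y = q := (hr q y).resolve_right fun hlt =>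
      (hlt.trans_le (le_rank_deltaStar δ hr _ u)).ne' (congrArg r hcyc)
    rw [hy] at hcyc
    simpa [hy] using ih hcyc

end Rank

end DeltaStar

def ABC.ofBool : Bool → ABC
  | true => ABC.b
  | false => ABC.c

theorem ABC.exists_map_ofBool_eq {v : List ABC} (hv : ∀ x ∈ v, x = ABC.b ∨ x = ABC.c) :
    ∃ w : List Bool, w.map ABC.ofBool = v := by
  refine ⟨v.map (fun x => decide (x = ABC.b)), ?_⟩
  rw [List.map_map]
  refine (List.map_congr_left fun x hx => ?_).trans v.map_id
  rcases hv x hx with rfl | rfl <;> rfl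

theorem ABC.ofBool_eq_b_or_c (t : Bool) : ABC.ofBool t = ABC.b ∨ ABC.ofBool t = ABC.c := by
  cases t <;> simp [ABC.ofBool]

namespace SatDelta

variable {m n : ℕ} (C : Fin m → Fin n → Option Bool)

def rank : Option (Fin m × Fin (n + 2)) → ℕ
  | none => n + 2
  | some (_, j) => j

theorem eq_or_rank_lt (q : Option (Fin m × Fin (n + 2))) (x : ABC) :
    satDelta C q x = q ∨ rank q < rank (satDelta C q x) := by
  rcases q with _ | ⟨i, j⟩
  · exact .inl (by cases x <;> rfl)
  have := j.isLt
  cases x <;> simp only [satDelta] <;> split_ifs <;>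
    simp only [rank, Option.some.injEq, Prod.mk.injEq, true_and, Fin.ext_iff,
      true_or, false_or] <;> omega

theorem weaklyAcyclic : WeaklyAcyclic (satDelta C) :=
  weaklyAcyclic_of_rank _ (eq_or_rank_lt C)

theorem deltaStar_none (u : List ABC) : deltaStar (satDelta C) none u = none :=
  deltaStar_eq_self_of_forall_mem _ fun x _ => by cases x <;> rfl

theorem apply_zero_of_ne_c (i : Fin m) {x : ABC} (hx : x ≠ ABC.c) :
    satDelta C (some (i, 0)) x = some (i, 0) := by
  cases x <;> simp_all [satDelta]

theorem deltaStar_zero_of_forall_mem (i : Fin m) {u : List ABC}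
    (hu : ∀ x ∈ u, x = ABC.a ∨ x = ABC.b) :
    deltaStar (satDelta C) (some (i, 0)) u = some (i, 0) :=
  deltaStar_eq_self_of_forall_mem _ fun x hx =>
    apply_zero_of_ne_c C i (by rcases hu x hx with rfl | rfl <;> decide)

theorem apply_zero_c (i : Fin m) : satDelta C (some (i, 0)) ABC.c = some (i, 1) := by
  simp [satDelta]

theorem apply_ofBool {i : Fin m} {j : Fin (n + 2)} {s : ℕ} (hj : (j : ℕ) = s + 1) (hs : s < n)
    (t : Bool) :
    satDelta C (some (i, j)) (ABC.ofBool t) =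
      if C i ⟨s, hs⟩ = some t then none else some (i, ⟨s + 2, by omega⟩) := by
  cases t <;> simp [satDelta, ABC.ofBool, hj, Nat.succ_le_of_lt hs]

theorem apply_ofBool_last {i : Fin m} {j : Fin (n + 2)} (hj : (j : ℕ) = n + 1) (t : Bool) :
    satDelta C (some (i, j)) (ABC.ofBool t) = some (i, j) := by
  cases t <;> simp [satDelta, ABC.ofBool, hj]

/-- Started at `q_{i,s+1}`, the letter `w[k - s]` is read at `q_{i,k+1}`, i.e. as the value
of the variable with `Fin n` index `k`. -/
theorem deltaStar_map_ofBool_eq_none_iff (i : Fin m) (w : List Bool) {j : Fin (n + 2)} {s : ℕ}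
    (hj : (j : ℕ) = s + 1) :
    deltaStar (satDelta C) (some (i, j)) (w.map ABC.ofBool) = none ↔
      ∃ k : Fin n, s ≤ k ∧ ∃ t, C i k = some t ∧ w[(k : ℕ) - s]? = some t := by
  induction w generalizing j s with
  | nil => simp [deltaStar]
  | cons t w ih =>
    rw [List.map_cons, deltaStar_cons]
    rcases Nat.lt_or_ge s n with hs | hs
    · rw [apply_ofBool C hj hs]
      split_ifs with hC
      · simp only [deltaStar_none, true_iff]
        exact ⟨⟨s, hs⟩, le_rfl, t, hC, by simp⟩
      · rw [ih (s := s + 1) rfl]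
        constructor
        · rintro ⟨k, hk, t', hk', hw⟩
          exact ⟨k, by omega, t', hk', by rwa [show (k : ℕ) - s = k - (s + 1) + 1 by omega]⟩
        · rintro ⟨k, hk, t', hk', hw⟩
          obtain rfl | hlt := hk.eq_or_lt
          · simp_all
          · rw [show (k : ℕ) - s = k - (s + 1) + 1 by omega] at hw
            exact ⟨k, hlt, t', hk', hw⟩
    · have hjn : (j : ℕ) = n + 1 := by have := j.isLt; omega
      rw [apply_ofBool_last C hjn, ih hj]
      constructor <;> rintro ⟨k, hk, -⟩ <;> exact absurd k.isLt (by omega)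

theorem deltaStar_aba (hn : 0 < n) {i : Fin m} {j : Fin (n + 2)} (hj : j ≠ 0) :
    deltaStar (satDelta C) (some (i, j)) [ABC.a, ABC.b, ABC.a] = none := by
  have hj' : (j : ℕ) ≠ 0 := Fin.val_ne_iff.mpr hj
  rcases Nat.lt_or_ge 1 j with h1 | h1
  · rw [deltaStar_cons, show satDelta C (some (i, j)) ABC.a = none by simp [satDelta]; omega]
    exact deltaStar_none C _
  · rw [deltaStar_cons, show satDelta C (some (i, j)) ABC.a = some (i, j) by simp [satDelta, h1],
      deltaStar_cons, show ABC.b = ABC.ofBool true from rfl, apply_ofBool C (s := 0) (by omega) hn]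
    split_ifs <;> simp [deltaStar, satDelta]

end SatDelta

/-- The SAT reduction automaton is weakly acyclic, and it has a synchronizing
word in the language `(a+b)*c(b+c)*` iff the clause set encoded by `C` is
satisfiable (an assignment `β` satisfies clause `c_i` iff some literal of
`c_i` is made true, i.e., `∃ j, C i j = some (β j)`). -/
theorem sat_reduction_abStar_c_bcStar {m n : ℕ}
    (C : Fin m → Fin n → Option Bool) :
    WeaklyAcyclic (satDelta C) ∧
    ((∃ u v : List ABC, (∀ x ∈ u, x = ABC.a ∨ x = ABC.b) ∧
        (∀ x ∈ v, x = ABC.b ∨ x = ABC.c) ∧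
        ∃ q : Option (Fin m × Fin (n + 2)),
          ∀ p : Option (Fin m × Fin (n + 2)),
            deltaStar (satDelta C) p (u ++ ABC.c :: v) = q) ↔
      ∃ β : Fin n → Bool, ∀ i : Fin m, ∃ j : Fin n, C i j = some (β j)) := by
  refine ⟨SatDelta.weaklyAcyclic C, ⟨?_, ?_⟩⟩
  · rintro ⟨u, v, hu, hv, q, hq⟩
    obtain ⟨w, rfl⟩ := ABC.exists_map_ofBool_eq hv
    have hq_none : q = none := (hq none).symm.trans (SatDelta.deltaStar_none C _)
    refine ⟨fun k => w.getD k false, fun i => ?_⟩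
    have hsink := hq (some (i, 0))
    rw [hq_none, deltaStar_append, SatDelta.deltaStar_zero_of_forall_mem C i hu, deltaStar_cons,
      SatDelta.apply_zero_c,
      SatDelta.deltaStar_map_ofBool_eq_none_iff C i w (s := 0) (by simp)] at hsink
    obtain ⟨k, -, t, hk, hw⟩ := hsink
    rw [Nat.sub_zero] at hw
    exact ⟨k, by simpa [List.getD_eq_getElem?_getD, hw] using hk⟩
  · rintro ⟨β, hβ⟩
    refine ⟨[ABC.a, ABC.b, ABC.a], (List.ofFn β).map ABC.ofBool, by simp, ?_, none, ?_⟩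
    · intro x hx
      obtain ⟨t, -, rfl⟩ := List.mem_map.mp hx
      exact ABC.ofBool_eq_b_or_c t
    · rintro (_ | ⟨i, j⟩)
      · exact SatDelta.deltaStar_none C _
      obtain ⟨k, hk⟩ := hβ i
      rw [deltaStar_append]
      by_cases hj : j = 0
      · subst hj
        rw [SatDelta.deltaStar_zero_of_forall_mem C i (by simp),
          deltaStar_cons, SatDelta.apply_zero_c,
          SatDelta.deltaStar_map_ofBool_eq_none_iff C i _ (s := 0) (by simp)]
        exact ⟨k, Nat.zero_le _, β k, hk, by simp⟩
      · rw [SatDelta.deltaStar_aba C (Fin.pos k) hj]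
        exact SatDelta.deltaStar_none C _
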